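/- arXiv:1012.0351 — 4 statements merged into one kernel-verified Lean document; each statement's English description precedes it below -/
import Mathlib

section
/- Let 𝒮 ⊆ ℝ^d be a measurable set, p and n positive integers with n < p, and x : 𝒮 → ℝ^p a measurable map such that s ↦ x(s)x(s)ᵀ is integrable over 𝒮. Define the symmetric positive semidefinite matrix C = ∫_𝒮 x(s)x(s)ᵀ ds and let θ₁ ≥ θ₂ ≥ ⋯ ≥ θ_p be its eigenvalues in decreasing order. Then for every p × n real matrix X of full column rank, ∫_𝒮 (inf over a ∈ ℝ^n of ‖Xa − x(s)‖²) ds ≥ sqrt( Σ_{k=n+1}^{p} θ_k² ), where ‖·‖ is the Euclidean norm on ℝ^p. -/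
open MeasureTheory Matrix

/-- Euclidean norm on `Fin k → ℝ`. -/
noncomputable def enorm {k : ℕ} (v : Fin k → ℝ) : ℝ := Real.sqrt (∑ i, v i ^ 2)

section helpers
open Finset

lemma card_tail {p n : ℕ} (h : n ≤ p) :
    ((Finset.univ.filter (fun k : Fin p => n ≤ (k : ℕ))).card) = p - n := by
  rw [← Nat.card_Ico n p]
  refine Finset.card_bij (fun k _ => (k : ℕ)) ?_ ?_ ?_
  · intro k hk
    simp only [Finset.mem_filter] at hk
    exact Finset.mem_Ico.mpr ⟨hk.2, k.isLt⟩
  · intro a _ b _ h; exact Fin.val_injective h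
  · intro m hm
    rw [Finset.mem_Ico] at hm
    exact ⟨⟨m, hm.2⟩, by simp [hm.1], rfl⟩

lemma maj {p n : ℕ} (hnp : n < p) (θ m : Fin p → ℝ)
    (hθ : ∀ i j : Fin p, i ≤ j → θ j ≤ θ i)
    (hm0 : ∀ k, 0 ≤ m k) (hm1 : ∀ k, m k ≤ 1)
    (hsum : ∑ k, m k = (p : ℝ) - n) :
    ∑ k ∈ Finset.univ.filter (fun k : Fin p => n ≤ (k : ℕ)), θ k ≤ ∑ k, m k * θ k := by
  classical
  set B := Finset.univ.filter (fun k : Fin p => n ≤ (k : ℕ)) with hB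
  set A := Finset.univ.filter (fun k : Fin p => ¬ n ≤ (k : ℕ)) with hA
  have hsplit : ∀ f : Fin p → ℝ, ∑ k ∈ A, f k + ∑ k ∈ B, f k = ∑ k, f k := by
    intro f
    rw [hA, hB, Finset.sum_filter_not_add_sum_filter]
  set t : ℝ := θ ⟨n, hnp⟩ with ht
  have hcardB : (B.card : ℝ) = (p : ℝ) - n := by
    rw [hB, card_tail hnp.le, Nat.cast_sub hnp.le]
  have h1 : t * ∑ k ∈ A, m k ≤ ∑ k ∈ A, m k * θ k := by
    rw [Finset.mul_sum]
    apply Finset.sum_le_sum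
    intro k hk
    rw [hA, Finset.mem_filter] at hk
    have hk2 := hk.2
    have hk' : (k : Fin p) ≤ ⟨n, hnp⟩ := by
      rw [Fin.le_def]
      show (k : ℕ) ≤ n
      omega
    calc t * m k = m k * t := mul_comm _ _
    _ ≤ m k * θ k := mul_le_mul_of_nonneg_left (hθ k ⟨n, hnp⟩ hk') (hm0 k)
  have h2 : ∑ k ∈ B, (1 - m k) * θ k ≤ t * ∑ k ∈ B, (1 - m k) := by
    rw [Finset.mul_sum]
    apply Finset.sum_le_sum
    intro k hk
    rw [hB, Finset.mem_filter] at hk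
    have hk' : (⟨n, hnp⟩ : Fin p) ≤ k := by
      rw [Fin.le_def]; exact hk.2
    calc (1 - m k) * θ k ≤ (1 - m k) * t :=
          mul_le_mul_of_nonneg_left (hθ ⟨n, hnp⟩ k hk') (by linarith [hm1 k])
    _ = t * (1 - m k) := mul_comm _ _
  have h3 : ∑ k ∈ B, (1 - m k) = ∑ k ∈ A, m k := by
    have := hsplit m
    have hc : ∑ k ∈ B, (1 - m k) = (B.card : ℝ) - ∑ k ∈ B, m k := by
      rw [Finset.sum_sub_distrib, Finset.sum_const, nsmul_eq_mul, mul_one]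
    rw [hc, hcardB]; linarith
  have h4 : ∑ k ∈ B, θ k - ∑ k ∈ B, m k * θ k = ∑ k ∈ B, (1 - m k) * θ k := by
    rw [← Finset.sum_sub_distrib]
    apply Finset.sum_congr rfl; intro k _; ring
  have h5 := hsplit (fun k => m k * θ k)
  rw [h3] at h2
  linarith

lemma sqrt_sum_sq_le {ι : Type*} (s : Finset ι) (f : ι → ℝ) (hf : ∀ i ∈ s, 0 ≤ f i) :
    Real.sqrt (∑ i ∈ s, f i ^ 2) ≤ ∑ i ∈ s, f i := by
  have h1 : ∑ i ∈ s, f i ^ 2 ≤ (∑ i ∈ s, f i) ^ 2 := Finset.sum_sq_le_sq_sum_of_nonneg hf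
  calc Real.sqrt (∑ i ∈ s, f i ^ 2) ≤ Real.sqrt ((∑ i ∈ s, f i) ^ 2) := Real.sqrt_le_sqrt h1
  _ = ∑ i ∈ s, f i := Real.sqrt_sq (Finset.sum_nonneg hf)

end helpers

lemma enorm_sq {k : ℕ} (v : Fin k → ℝ) : _root_.enorm v ^ 2 = v ⬝ᵥ v := by
  rw [_root_.enorm, Real.sq_sqrt (Finset.sum_nonneg fun i _ => sq_nonneg _), dotProduct]
  exact Finset.sum_congr rfl fun i _ => by ring

lemma dp_self_nonneg {k : ℕ} (v : Fin k → ℝ) : 0 ≤ v ⬝ᵥ v :=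
  Finset.sum_nonneg fun i _ => mul_self_nonneg _

lemma isUnit_gram {p n : ℕ} (X : Matrix (Fin p) (Fin n) ℝ) (hX : X.rank = n) :
    IsUnit (Xᵀ * X).det := by
  set K := Xᵀ * X with hK
  have hrank : K.rank = n := by rw [hK, Matrix.rank_transpose_mul_self, hX]
  have hsurj : Function.Surjective K.mulVecLin := by
    rw [← LinearMap.range_eq_top]
    apply Submodule.eq_top_of_finrank_eq
    rw [show Module.finrank ℝ (LinearMap.range K.mulVecLin) = K.rank from rfl, hrank]
    simp
  have hbij : Function.Bijective K.mulVecLin :=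
    ⟨(LinearMap.injective_iff_surjective).mpr hsurj, hsurj⟩
  have hU : IsUnit (Matrix.toLinAlgEquiv' K) := by
    rw [Module.End.isUnit_iff]
    have : ⇑(Matrix.toLinAlgEquiv' K) = ⇑(K.mulVecLin) := by
      funext v; simp [Matrix.toLinAlgEquiv'_apply]
    rw [this]; exact hbij
  have h2 := hU.map (Matrix.toLinAlgEquiv' (R := ℝ) (n := Fin n)).symm
  rw [AlgEquiv.symm_apply_apply] at h2
  exact (Matrix.isUnit_iff_isUnit_det _).mp h2

lemma quad {p : ℕ} (Q : Matrix (Fin p) (Fin p) ℝ) (hQ : Qᵀ * Q = Q) (w : Fin p → ℝ) :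
    Q.mulVec w ⬝ᵥ Q.mulVec w = w ⬝ᵥ Q.mulVec w := by
  rw [Matrix.dotProduct_mulVec, ← Matrix.mulVec_transpose, Matrix.mulVec_mulVec, hQ,
    dotProduct_comm]

lemma inf_eq {p n : ℕ} (X : Matrix (Fin p) (Fin n) ℝ) (P : Matrix (Fin p) (Fin p) ℝ)
    (hPsym : Pᵀ = P) (hPP : P * P = P) (hPX : P * X = X)
    (hsur : ∀ y : Fin p → ℝ, ∃ a : Fin n → ℝ, X.mulVec a = P.mulVec y) (y : Fin p → ℝ) :
    (⨅ a : Fin n → ℝ, _root_.enorm (X.mulVec a - y) ^ 2) = y ⬝ᵥ (1 - P).mulVec y := by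
  set Q : Matrix (Fin p) (Fin p) ℝ := 1 - P with hQdef
  have hQsym : Qᵀ = Q := by rw [hQdef, transpose_sub, transpose_one, hPsym]
  have hQQ : Q * Q = Q := by
    simp only [hQdef, Matrix.sub_mul, Matrix.mul_sub, Matrix.one_mul, Matrix.mul_one, hPP]; abel
  have hQtQ : Qᵀ * Q = Q := by rw [hQsym, hQQ]
  have hQX : Q * X = 0 := by rw [hQdef, Matrix.sub_mul, Matrix.one_mul, hPX, sub_self]
  have hlb : ∀ a : Fin n → ℝ, y ⬝ᵥ Q.mulVec y ≤ _root_.enorm (X.mulVec a - y) ^ 2 := by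
    intro a
    rw [enorm_sq]
    set w : Fin p → ℝ := X.mulVec a - y with hw
    have hsplit : w = Q.mulVec w + P.mulVec w := by
      rw [hQdef, sub_mulVec, one_mulVec]; abel
    have hcross : Q.mulVec w ⬝ᵥ P.mulVec w = 0 := by
      rw [Matrix.dotProduct_mulVec, ← Matrix.mulVec_transpose, Matrix.mulVec_mulVec, hPsym]
      have : P * Q = 0 := by rw [hQdef, Matrix.mul_sub, Matrix.mul_one, hPP, sub_self]
      rw [this, Matrix.zero_mulVec, zero_dotProduct]
    have hQw : Q.mulVec w = - Q.mulVec y := by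
      rw [hw, Matrix.mulVec_sub, Matrix.mulVec_mulVec, hQX, Matrix.zero_mulVec, zero_sub]
    have h1 : w ⬝ᵥ w = Q.mulVec w ⬝ᵥ Q.mulVec w + P.mulVec w ⬝ᵥ P.mulVec w := by
      calc w ⬝ᵥ w = (Q.mulVec w + P.mulVec w) ⬝ᵥ (Q.mulVec w + P.mulVec w) := by
            rw [← hsplit]
      _ = Q.mulVec w ⬝ᵥ Q.mulVec w + Q.mulVec w ⬝ᵥ P.mulVec w
            + (P.mulVec w ⬝ᵥ Q.mulVec w + P.mulVec w ⬝ᵥ P.mulVec w) := by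
            rw [add_dotProduct, dotProduct_add, dotProduct_add]
      _ = Q.mulVec w ⬝ᵥ Q.mulVec w + P.mulVec w ⬝ᵥ P.mulVec w := by
            rw [hcross, dotProduct_comm (P.mulVec w), hcross]; ring
    have h2 : Q.mulVec w ⬝ᵥ Q.mulVec w = y ⬝ᵥ Q.mulVec y := by
      rw [hQw, neg_dotProduct, dotProduct_neg, neg_neg, quad Q hQtQ]
    nlinarith [dp_self_nonneg (P.mulVec w), h1, h2]
  have hbdd : BddBelow (Set.range fun a : Fin n → ℝ => _root_.enorm (X.mulVec a - y) ^ 2) := by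
    refine ⟨0, ?_⟩
    rintro z ⟨a, rfl⟩
    exact sq_nonneg _
  obtain ⟨a₀, ha₀⟩ := hsur y
  have hval : _root_.enorm (X.mulVec a₀ - y) ^ 2 = y ⬝ᵥ Q.mulVec y := by
    rw [enorm_sq, ha₀]
    have : P.mulVec y - y = - Q.mulVec y := by
      rw [hQdef, sub_mulVec, one_mulVec]; abel
    rw [this, neg_dotProduct, dotProduct_neg, neg_neg, quad Q hQtQ]
  apply le_antisymm
  · exact hval ▸ ciInf_le hbdd a₀
  · exact le_ciInf hlb



/-- Lower bound on the average best linear approximation error: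
for every full-column-rank `p × n` matrix `X` (with `n < p`),
`∫_𝒮 inf_a ‖Xa − x(s)‖² ds ≥ sqrt(Σ_{k=n+1}^p θ_k²)`, where `θ₁ ≥ ⋯ ≥ θ_p` are the
eigenvalues of `C = ∫_𝒮 x(s)x(s)ᵀ ds`. -/
theorem stmt0 {d p n : ℕ} (hp : 0 < p) (hn : 0 < n) (hnp : n < p)
    (S : Set (Fin d → ℝ)) (hS : MeasurableSet S)
    (x : (Fin d → ℝ) → (Fin p → ℝ)) (hx : Measurable x)
    (hint : ∀ i j : Fin p, IntegrableOn (fun s => x s i * x s j) S)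
    (C : Matrix (Fin p) (Fin p) ℝ)
    (hC : ∀ i j, C i j = ∫ s in S, x s i * x s j)
    -- eigendecomposition of the symmetric PSD matrix `C` with eigenvalues in decreasing order
    (U : Matrix (Fin p) (Fin p) ℝ) (θ : Fin p → ℝ)
    (hUorth : U * Uᵀ = 1) (hUorth' : Uᵀ * U = 1)
    (hdecomp : C = U * Matrix.diagonal θ * Uᵀ)
    (hθdec : ∀ i j : Fin p, i ≤ j → θ j ≤ θ i)
    (X : Matrix (Fin p) (Fin n) ℝ) (hX : X.rank = n) :
    (∫ s in S, ⨅ a : Fin n → ℝ, (_root_.enorm (X.mulVec a - x s)) ^ 2) ≥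
      Real.sqrt (∑ k ∈ Finset.univ.filter (fun k : Fin p => n ≤ (k : ℕ)), θ k ^ 2) := by
  classical
  have hdet := isUnit_gram X hX
  set K : Matrix (Fin n) (Fin n) ℝ := Xᵀ * X with hK
  set M : Matrix (Fin n) (Fin n) ℝ := K⁻¹ with hM
  have hKM : K * M = 1 := Matrix.mul_nonsing_inv _ hdet
  have hMK : M * K = 1 := Matrix.nonsing_inv_mul _ hdet
  have hKsym : Kᵀ = K := by rw [hK, transpose_mul, transpose_transpose]
  have hMsym : Mᵀ = M := by rw [hM, Matrix.transpose_nonsing_inv, hKsym]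
  set P : Matrix (Fin p) (Fin p) ℝ := X * M * Xᵀ with hP
  have hPsym : Pᵀ = P := by
    rw [hP, transpose_mul, transpose_mul, transpose_transpose, hMsym, Matrix.mul_assoc]
  have hPX : P * X = X := by
    calc P * X = X * (M * (Xᵀ * X)) := by rw [hP]; simp only [Matrix.mul_assoc]
    _ = X := by rw [← hK, hMK, Matrix.mul_one]
  have hPP : P * P = P := by
    calc P * P = (P * X) * (M * Xᵀ) := by rw [hP]; simp only [Matrix.mul_assoc]
    _ = P := by rw [hPX, hP, Matrix.mul_assoc]
  have hsur : ∀ y : Fin p → ℝ, ∃ a : Fin n → ℝ, X.mulVec a = P.mulVec y := fun y =>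
    ⟨(M * Xᵀ).mulVec y, by rw [Matrix.mulVec_mulVec, ← Matrix.mul_assoc, ← hP]⟩
  set Q : Matrix (Fin p) (Fin p) ℝ := 1 - P with hQdef
  have hQsym : Qᵀ = Q := by rw [hQdef, transpose_sub, transpose_one, hPsym]
  have hQQ : Q * Q = Q := by
    simp only [hQdef, Matrix.sub_mul, Matrix.mul_sub, Matrix.one_mul, Matrix.mul_one, hPP]; abel
  have hpt : ∀ s, (⨅ a : Fin n → ℝ, _root_.enorm (X.mulVec a - x s) ^ 2)
      = x s ⬝ᵥ Q.mulVec (x s) := fun s => inf_eq X P hPsym hPP hPX hsur (x s)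
  -- integral computation
  have hrepr : ∀ y : Fin p → ℝ, y ⬝ᵥ Q.mulVec y = ∑ i, ∑ j, Q i j * (y i * y j) := by
    intro y
    rw [dotProduct]
    refine Finset.sum_congr rfl fun i _ => ?_
    simp only [Matrix.mulVec, dotProduct]
    rw [Finset.mul_sum]
    exact Finset.sum_congr rfl fun j _ => by ring
  have hintg : ∀ i j : Fin p, IntegrableOn (fun s => Q i j * (x s i * x s j)) S :=
    fun i j => (hint i j).const_mul _
  have hI : (∫ s in S, x s ⬝ᵥ Q.mulVec (x s)) = ∑ i, ∑ j, Q i j * C i j := by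
    calc (∫ s in S, x s ⬝ᵥ Q.mulVec (x s))
        = ∫ s in S, ∑ i, ∑ j, Q i j * (x s i * x s j) := by
          exact integral_congr_ae (Filter.Eventually.of_forall fun s => hrepr (x s))
    _ = ∑ i, ∫ s in S, ∑ j, Q i j * (x s i * x s j) :=
          integral_finset_sum _ (fun i _ => integrable_finset_sum _ fun j _ => hintg i j)
    _ = ∑ i, ∑ j, ∫ s in S, Q i j * (x s i * x s j) :=
          Finset.sum_congr rfl fun i _ => integral_finset_sum _ fun j _ => hintg i j
    _ = ∑ i, ∑ j, Q i j * C i j := by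
          refine Finset.sum_congr rfl fun i _ => Finset.sum_congr rfl fun j _ => ?_
          rw [integral_const_mul, hC]
  -- symmetry of C
  have hCsym : Cᵀ = C := by
    rw [hdecomp, transpose_mul, transpose_mul, transpose_transpose,
      Matrix.diagonal_transpose, Matrix.mul_assoc]
  have hCs : ∀ i j, C j i = C i j := by
    intro i j
    conv_lhs => rw [← hCsym]
    rw [Matrix.transpose_apply]
  have htr1 : ∑ i, ∑ j, Q i j * C i j = Matrix.trace (Q * C) := by
    rw [Matrix.trace]
    refine (Finset.sum_congr rfl fun i _ => ?_).symm
    rw [Matrix.diag_apply, Matrix.mul_apply]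
    exact Finset.sum_congr rfl fun j _ => by rw [hCs i j]
  set N : Matrix (Fin p) (Fin p) ℝ := Uᵀ * Q * U with hN
  have htr2 : Matrix.trace (Q * C) = ∑ k, N k k * θ k := by
    rw [hdecomp]
    have e1 : Q * (U * Matrix.diagonal θ * Uᵀ) = (Q * U * Matrix.diagonal θ) * Uᵀ := by
      simp only [Matrix.mul_assoc]
    rw [e1, Matrix.trace_mul_comm, ← Matrix.mul_assoc, ← Matrix.mul_assoc, ← hN]
    rw [Matrix.trace]
    refine Finset.sum_congr rfl fun k _ => ?_
    rw [Matrix.diag_apply, Matrix.mul_diagonal]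
  have hNsym : Nᵀ = N := by
    rw [hN, transpose_mul, transpose_mul, transpose_transpose, hQsym, Matrix.mul_assoc]
  have hNN : N * N = N := by
    calc N * N = Uᵀ * (Q * ((U * Uᵀ) * (Q * U))) := by rw [hN]; simp only [Matrix.mul_assoc]
    _ = Uᵀ * (Q * (Q * U)) := by rw [hUorth, Matrix.one_mul]
    _ = N := by rw [← Matrix.mul_assoc Q Q U, hQQ, hN, Matrix.mul_assoc]
  have hNtN : Nᵀ * N = N := by rw [hNsym, hNN]
  have hNdiag0 : ∀ k, 0 ≤ N k k := by
    intro k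
    have h : N k k = ∑ j, N j k * N j k := by
      conv_lhs => rw [← hNtN]
      rw [Matrix.mul_apply]
      exact Finset.sum_congr rfl fun j _ => by rw [Matrix.transpose_apply]
    rw [h]
    exact Finset.sum_nonneg fun j _ => mul_self_nonneg _
  have hNdiag1 : ∀ k, N k k ≤ 1 := by
    intro k
    set N' : Matrix (Fin p) (Fin p) ℝ := 1 - N with hN'
    have hN'sym : N'ᵀ = N' := by rw [hN', transpose_sub, transpose_one, hNsym]
    have hN'N' : N' * N' = N' := by
      simp only [hN', Matrix.sub_mul, Matrix.mul_sub, Matrix.one_mul, Matrix.mul_one, hNN]; abel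
    have hN'tN' : N'ᵀ * N' = N' := by rw [hN'sym, hN'N']
    have h : N' k k = ∑ j, N' j k * N' j k := by
      conv_lhs => rw [← hN'tN']
      rw [Matrix.mul_apply]
      exact Finset.sum_congr rfl fun j _ => by rw [Matrix.transpose_apply]
    have h0 : 0 ≤ N' k k := by
      rw [h]; exact Finset.sum_nonneg fun j _ => mul_self_nonneg _
    have : N' k k = 1 - N k k := by
      rw [hN', Matrix.sub_apply, Matrix.one_apply_eq]
    linarith [this ▸ h0]
  have hNtrace : ∑ k, N k k = (p : ℝ) - n := by
    have e1 : ∑ k, N k k = Matrix.trace N := by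
      rw [Matrix.trace]; rfl
    have e2 : Matrix.trace N = Matrix.trace Q := by
      rw [hN, Matrix.trace_mul_cycle, hUorth, Matrix.one_mul]
    have e3 : Matrix.trace P = (n : ℝ) := by
      rw [hP, Matrix.trace_mul_cycle, ← hK, hKM, Matrix.trace_one, Fintype.card_fin]
    have e4 : Matrix.trace Q = (p : ℝ) - n := by
      rw [hQdef, Matrix.trace_sub, Matrix.trace_one, e3, Fintype.card_fin]
    rw [e1, e2, e4]
  -- nonnegativity of eigenvalues
  have hDU : Uᵀ * C * U = Matrix.diagonal θ := by
    rw [hdecomp]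
    calc Uᵀ * (U * Matrix.diagonal θ * Uᵀ) * U
        = (Uᵀ * U) * (Matrix.diagonal θ * (Uᵀ * U)) := by simp only [Matrix.mul_assoc]
    _ = Matrix.diagonal θ := by rw [hUorth', Matrix.mul_one, Matrix.one_mul]
  have hθ0 : ∀ k, 0 ≤ θ k := by
    intro k
    set v : Fin p → ℝ := fun j => U j k with hv
    have h1 : θ k = ∑ l, ∑ j, v l * C l j * v j := by
      have e := congrFun (congrFun hDU k) k
      rw [Matrix.diagonal_apply_eq] at e
      rw [← e]
      calc (Uᵀ * C * U) k k = ∑ j, (∑ l, U l k * C l j) * U j k := by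
            rw [Matrix.mul_apply]
            refine Finset.sum_congr rfl fun j _ => ?_
            rw [Matrix.mul_apply]
            simp only [Matrix.transpose_apply]
      _ = ∑ j, ∑ l, v l * C l j * v j := by
            refine Finset.sum_congr rfl fun j _ => ?_
            rw [Finset.sum_mul]
      _ = ∑ l, ∑ j, v l * C l j * v j := Finset.sum_comm
    have h2 : ∑ l, ∑ j, v l * C l j * v j = ∫ s in S, (∑ j, v j * x s j) ^ 2 := by
      have hterm : ∀ l j : Fin p, v l * C l j * v j
          = ∫ s in S, (v l * v j) * (x s l * x s j) := by
        intro l j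
        calc v l * C l j * v j = (v l * v j) * ∫ s in S, x s l * x s j := by rw [hC]; ring
        _ = ∫ s in S, (v l * v j) * (x s l * x s j) := (integral_const_mul _ _).symm
      calc ∑ l, ∑ j, v l * C l j * v j
          = ∑ l, ∑ j, ∫ s in S, (v l * v j) * (x s l * x s j) := by
            exact Finset.sum_congr rfl fun l _ => Finset.sum_congr rfl fun j _ => hterm l j
      _ = ∑ l, ∫ s in S, ∑ j, (v l * v j) * (x s l * x s j) := by
            exact Finset.sum_congr rfl fun l _ =>
              (integral_finset_sum _ fun j _ => (hint l j).const_mul _).symm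
      _ = ∫ s in S, ∑ l, ∑ j, (v l * v j) * (x s l * x s j) := by
            exact (integral_finset_sum _ fun l _ =>
              integrable_finset_sum _ fun j _ => (hint l j).const_mul _).symm
      _ = ∫ s in S, (∑ j, v j * x s j) ^ 2 := by
            refine integral_congr_ae (Filter.Eventually.of_forall fun s => ?_)
            show ∑ l, ∑ j, (v l * v j) * (x s l * x s j) = (∑ j, v j * x s j) ^ 2
            rw [sq, Finset.sum_mul_sum]
            exact Finset.sum_congr rfl fun l _ => Finset.sum_congr rfl fun j _ => by ring
    rw [h1, h2]
    exact setIntegral_nonneg hS fun s _ => sq_nonneg _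
  -- final assembly
  rw [ge_iff_le]
  have hIeq : (∫ s in S, ⨅ a : Fin n → ℝ, _root_.enorm (X.mulVec a - x s) ^ 2)
      = ∑ i, ∑ j, Q i j * C i j := by
    rw [← hI]
    exact integral_congr_ae (Filter.Eventually.of_forall fun s => hpt s)
  rw [hIeq]
  calc Real.sqrt (∑ k ∈ Finset.univ.filter (fun k : Fin p => n ≤ (k : ℕ)), θ k ^ 2)
      ≤ ∑ k ∈ Finset.univ.filter (fun k : Fin p => n ≤ (k : ℕ)), θ k :=
        sqrt_sum_sq_le _ _ (fun k _ => hθ0 k)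
  _ ≤ ∑ k, N k k * θ k :=
        maj hnp θ (fun k => N k k) hθdec hNdiag0 hNdiag1 hNtrace
  _ = ∑ i, ∑ j, Q i j * C i j := by rw [← htr2, ← htr1]
end

section
/- Let p, n, m be positive integers, 𝒮 a set, f : ℝ^p × ℝ × 𝒮 → ℝ^p a function, t₁, …, t_m real numbers, w₁, …, w_m real weights, s₁, …, s_n ∈ 𝒮, and x₁, …, x_n maps from {t₁,…,t_m} to ℝ^p. For i = 1,…,m let X_i and F_i be the p × n matrices whose j-th columns are x_j(t_i) and f(x_j(t_i), t_i, s_j) respectively, and for s ∈ 𝒮 and a ∈ ℝ^n define ρ(a, s) = Σ_{i=1}^m w_i² ‖F_i a − f(X_i a, t_i, s)‖². Then for each j ∈ {1,…,n}, the j-th standard basis vector e_j of ℝ^n satisfies eᵀe_j = 1, ρ(e_j, s_j) = 0, and X_i e_j = x_j(t_i) for all i; in particular, since ρ(a, s_j) ≥ 0 for every a with eᵀa = 1, e_j is a minimizer of ρ(·, s_j) over the constraint set {a ∈ ℝ^n : eᵀa = 1}, so the residual-minimizing approximation interpolates the basis elements: x̃(t_i, s_j) = x_j(t_i) for all i, j.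 -/
open Matrix

/-- Interpolation property of the residual minimizing approximation:
for each `j`, the `j`-th standard basis vector `e_j` satisfies the constraint `eᵀe_j = 1`,
gives zero residual `ρ(e_j, s_j) = 0`, reproduces the basis `X_i e_j = x_j(t_i)`, and is a
minimizer of `ρ(·, s_j)` over `{a : eᵀa = 1}` (since `ρ ≥ 0`), so the approximation
interpolates: `x̃(t_i, s_j) = x_j(t_i)`. -/
theorem stmt1 {p n m : ℕ} (hp : 0 < p) (hn : 0 < n) (hm : 0 < m)
    {S : Type*} (f : (Fin p → ℝ) → ℝ → S → (Fin p → ℝ))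
    (t : Fin m → ℝ) (w : Fin m → ℝ) (s : Fin n → S)
    (x : Fin n → Fin m → (Fin p → ℝ))
    (X F : Fin m → Matrix (Fin p) (Fin n) ℝ)
    -- the j-th column of `X i` is `x j (t i)` and that of `F i` is `f (x j (t i)) (t i) (s j)`
    (hX : ∀ i k j, X i k j = x j i k)
    (hF : ∀ i k j, F i k j = f (x j i) (t i) (s j) k)
    (ρ : (Fin n → ℝ) → S → ℝ)
    (hρ : ∀ a σ, ρ a σ =
      ∑ i, (w i) ^ 2 * (∑ k, ((F i).mulVec a k - f ((X i).mulVec a) (t i) σ k) ^ 2)) :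
    ∀ j : Fin n,
      (∑ j', (Pi.single j 1 : Fin n → ℝ) j') = 1 ∧
      ρ (Pi.single j 1) (s j) = 0 ∧
      (∀ i, (X i).mulVec (Pi.single j 1) = x j i) ∧
      (∀ a : Fin n → ℝ, (∑ j', a j') = 1 → ρ (Pi.single j 1) (s j) ≤ ρ a (s j)) := by

  intro j
  have hXs : ∀ i, (X i).mulVec (Pi.single j 1) = x j i := by
    intro i
    funext k
    simp [Matrix.mulVec, dotProduct, Pi.single_apply, Finset.sum_ite_eq', hX]
  have hFs : ∀ i, (F i).mulVec (Pi.single j 1) = f (x j i) (t i) (s j) := by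
    intro i
    funext k
    simp [Matrix.mulVec, dotProduct, Pi.single_apply, Finset.sum_ite_eq', hF]
  have hzero : ρ (Pi.single j 1) (s j) = 0 := by
    rw [hρ]
    apply Finset.sum_eq_zero
    intro i _
    rw [hXs, hFs]
    simp
  refine ⟨by simp [Pi.single_apply], hzero, hXs, ?_⟩
  intro a _
  rw [hzero, hρ]
  positivity
end

section
/- Let 𝒮 ⊆ ℝ^d, let m ≥ 1, n ≥ 1, and let R : 𝒮 → ℝ^{m×n} be a continuous matrix-valued function. Suppose that for every s ∈ 𝒮 the (m+1) × n matrix obtained by appending the row eᵀ below R(s) has full column rank n. Then for each s ∈ 𝒮 the constrained least squares problem minimize ‖R(s)a‖ subject to eᵀa = 1 has a unique minimizer a(s) ∈ ℝ^n, and the map s ↦ a(s) is continuous on 𝒮. -/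
open Matrix

noncomputable section StmtThreeAux

/-- KKT matrix: `[[RᵀR, e],[eᵀ, 0]]`. -/
def stmt3KKT {m n : ℕ} (R : Matrix (Fin m) (Fin n) ℝ) :
    Matrix (Fin (n+1)) (Fin (n+1)) ℝ :=
  Matrix.of fun i j =>
    Fin.lastCases (Fin.lastCases 0 (fun _ => 1) j)
      (fun k => Fin.lastCases 1 (fun l => (Rᵀ * R) k l) j) i

/-- The candidate minimizer: first `n` entries of the last column of the inverse KKT matrix. -/
def stmt3a {m n : ℕ} (R : Matrix (Fin m) (Fin n) ℝ) : Fin n → ℝ :=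
  fun k => (stmt3KKT R)⁻¹ k.castSucc (Fin.last n)

/-- The Lagrange multiplier. -/
def stmt3l {m n : ℕ} (R : Matrix (Fin m) (Fin n) ℝ) : ℝ :=
  (stmt3KKT R)⁻¹ (Fin.last n) (Fin.last n)

lemma stmt3KKT_mulVec_castSucc {m n : ℕ} (R : Matrix (Fin m) (Fin n) ℝ)
    (x : Fin (n+1) → ℝ) (k : Fin n) :
    (stmt3KKT R).mulVec x k.castSucc =
      (∑ l, (Rᵀ * R) k l * x l.castSucc) + x (Fin.last n) := by
  simp only [mulVec, dotProduct, stmt3KKT, Matrix.of_apply, Fin.lastCases_castSucc]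
  rw [Fin.sum_univ_castSucc]
  simp

lemma stmt3KKT_mulVec_last {m n : ℕ} (R : Matrix (Fin m) (Fin n) ℝ)
    (x : Fin (n+1) → ℝ) :
    (stmt3KKT R).mulVec x (Fin.last n) = ∑ l : Fin n, x l.castSucc := by
  simp only [mulVec, dotProduct, stmt3KKT, Matrix.of_apply, Fin.lastCases_last]
  rw [Fin.sum_univ_castSucc]
  simp

lemma stmt3_mulVec_inj_of_rank {p : Type*} [Fintype p] {q : ℕ}
    (A : Matrix p (Fin q) ℝ) (h : A.rank = q) :
    Function.Injective A.mulVec := by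
  have hrn := LinearMap.finrank_range_add_finrank_ker A.mulVecLin
  rw [Module.finrank_pi] at hrn
  rw [Matrix.rank] at h
  have hker : Module.finrank ℝ (LinearMap.ker A.mulVecLin) = 0 := by
    simp [Fintype.card_fin] at hrn; omega
  have : LinearMap.ker A.mulVecLin = ⊥ := Submodule.finrank_eq_zero.mp hker
  have hinj : Function.Injective A.mulVecLin := LinearMap.ker_eq_bot.mp this
  exact hinj

lemma stmt3_det_ne_zero {m n : ℕ} (hn : 1 ≤ n) (R : Matrix (Fin m) (Fin n) ℝ)
    (hinj : Function.Injective
      (Matrix.fromRows R (Matrix.of fun (_ : Fin 1) (_ : Fin n) => (1:ℝ))).mulVec) :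
    (stmt3KKT R).det ≠ 0 := by
  intro hdet
  obtain ⟨v, hv0, hv⟩ := (Matrix.exists_mulVec_eq_zero_iff).mpr hdet
  set y : Fin n → ℝ := fun k => v k.castSucc with hy
  set μ : ℝ := v (Fin.last n) with hμ
  have hrow : ∀ k : Fin n, (Rᵀ * R).mulVec y k + μ = 0 := by
    intro k
    have := congrFun hv k.castSucc
    rw [stmt3KKT_mulVec_castSucc] at this
    simpa [mulVec, dotProduct] using this
  have hsum : ∑ l, y l = 0 := by
    have := congrFun hv (Fin.last n)
    rw [stmt3KKT_mulVec_last] at this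
    simpa using this
  have hcross : y ⬝ᵥ (Rᵀ * R).mulVec y = 0 := by
    have : ∀ k, (Rᵀ * R).mulVec y k = -μ := fun k => by linarith [hrow k]
    simp only [dotProduct]
    simp only [this]
    rw [← Finset.sum_mul, hsum, zero_mul]
  have hz : R.mulVec y ⬝ᵥ R.mulVec y = 0 := by
    rw [← Matrix.mulVec_mulVec, Matrix.dotProduct_mulVec, Matrix.vecMul_transpose] at hcross
    exact hcross
  have hzz : R.mulVec y = 0 := by
    funext i
    have h0 : ∀ i ∈ Finset.univ, (0:ℝ) ≤ R.mulVec y i * R.mulVec y i :=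
      fun i _ => mul_self_nonneg _
    have := (Finset.sum_eq_zero_iff_of_nonneg h0).mp hz i (Finset.mem_univ i)
    exact mul_self_eq_zero.mp this
  have hy0 : y = 0 := by
    apply hinj
    rw [Matrix.fromRows_mulVec]
    funext i
    cases i with
    | inl i => simp [hzz]
    | inr i => simp [mulVec, dotProduct, hsum]
  have hμ0 : μ = 0 := by
    have := hrow ⟨0, hn⟩
    rw [hy0] at this
    simpa using this
  apply hv0
  funext i
  refine Fin.lastCases ?_ ?_ i
  · exact hμ0
  · intro k; exact congrFun hy0 k

lemma stmt3_eqs {m n : ℕ} (R : Matrix (Fin m) (Fin n) ℝ)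
    (hdet : (stmt3KKT R).det ≠ 0) :
    ((Rᵀ * R).mulVec (stmt3a R) = fun _ => -(stmt3l R)) ∧ (∑ k, stmt3a R k) = 1 := by
  have hu : IsUnit (stmt3KKT R).det := isUnit_iff_ne_zero.mpr hdet
  set x : Fin (n+1) → ℝ := fun i => (stmt3KKT R)⁻¹ i (Fin.last n) with hxdef
  have hx : (stmt3KKT R).mulVec x = Pi.single (Fin.last n) 1 := by
    have h1 : (stmt3KKT R)⁻¹.mulVec (Pi.single (Fin.last n) (1:ℝ)) = x := by
      rw [Matrix.mulVec_single]
      funext i; simp [hxdef]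
    rw [← h1, Matrix.mulVec_mulVec, Matrix.mul_nonsing_inv _ hu, Matrix.one_mulVec]
  constructor
  · funext k
    have := congrFun hx k.castSucc
    rw [stmt3KKT_mulVec_castSucc] at this
    have hne : k.castSucc ≠ Fin.last n := Fin.ne_of_lt (Fin.castSucc_lt_last k)
    rw [Pi.single_eq_of_ne hne] at this
    have : (Rᵀ * R).mulVec (stmt3a R) k + stmt3l R = 0 := by
      simpa [mulVec, dotProduct, stmt3a, stmt3l, hxdef] using this
    linarith
  · have := congrFun hx (Fin.last n)
    rw [stmt3KKT_mulVec_last] at this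
    simpa [stmt3a, hxdef] using this

/-- Key decomposition of the residual square sum. -/
lemma stmt3_decomp {m n : ℕ} (R : Matrix (Fin m) (Fin n) ℝ)
    (hdet : (stmt3KKT R).det ≠ 0) (b : Fin n → ℝ) (hb : (∑ k, b k) = 1) :
    ∑ i, (R.mulVec b i) ^ 2 =
      (∑ i, (R.mulVec (stmt3a R) i) ^ 2) + ∑ i, (R.mulVec (b - stmt3a R) i) ^ 2 := by
  obtain ⟨heq, hsum⟩ := stmt3_eqs R hdet
  set a := stmt3a R
  set u : Fin n → ℝ := b - a with hu
  have husum : ∑ k, u k = 0 := by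
    simp only [hu, Pi.sub_apply, Finset.sum_sub_distrib, hb, hsum, sub_self]
  have hcross : (R.mulVec a) ⬝ᵥ (R.mulVec u) = 0 := by
    rw [Matrix.dotProduct_mulVec, ← Matrix.mulVec_transpose, Matrix.mulVec_mulVec, heq]
    simp only [dotProduct]
    rw [← Finset.mul_sum (a := -(stmt3l R)), husum, mul_zero]
  have hbdecomp : R.mulVec b = R.mulVec a + R.mulVec u := by
    rw [← Matrix.mulVec_add]
    congr 1
    · funext k; simp [hu]
  rw [hbdecomp]
  have : ∑ i, (R.mulVec a i + R.mulVec u i) ^ 2 =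
      (∑ i, (R.mulVec a i) ^ 2) + (∑ i, (R.mulVec u i) ^ 2)
        + 2 * ((R.mulVec a) ⬝ᵥ (R.mulVec u)) := by
    simp only [dotProduct, Finset.mul_sum]
    rw [← Finset.sum_add_distrib, ← Finset.sum_add_distrib]
    congr 1; funext i; ring
  simp only [Pi.add_apply]
  rw [this, hcross, mul_zero, add_zero]

end StmtThreeAux

/-- Euclidean norm on `Fin k → ℝ`. -/
noncomputable def enorm₂ {k : ℕ} (v : Fin k → ℝ) : ℝ := Real.sqrt (∑ i, v i ^ 2)

/-- If `s ↦ R(s)` is continuous on `𝒮 ⊆ ℝ^d` and for every `s ∈ 𝒮` the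
matrix obtained by appending the all-ones row below `R(s)` has full column rank `n`, then
for each `s ∈ 𝒮` the problem `min ‖R(s)a‖ s.t. eᵀa = 1` has a unique minimizer `a(s)`,
and `s ↦ a(s)` is continuous on `𝒮`. -/
theorem stmt3 {d m n : ℕ} (hm : 1 ≤ m) (hn : 1 ≤ n)
    (S : Set (Fin d → ℝ))
    (R : (Fin d → ℝ) → Matrix (Fin m) (Fin n) ℝ)
    (hRcont : ∀ i k, ContinuousOn (fun s => R s i k) S)
    (hrank : ∀ s ∈ S,
      (Matrix.fromRows (R s) (Matrix.of fun (_ : Fin 1) (_ : Fin n) => (1 : ℝ))).rank = n) :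
    ∃ a : (Fin d → ℝ) → (Fin n → ℝ),
      ContinuousOn a S ∧
      ∀ s ∈ S,
        (∑ k, a s k) = 1 ∧
        (∀ b : Fin n → ℝ, (∑ k, b k) = 1 →
          enorm₂ ((R s).mulVec (a s)) ≤ enorm₂ ((R s).mulVec b)) ∧
        (∀ b : Fin n → ℝ, (∑ k, b k) = 1 →
          (∀ c : Fin n → ℝ, (∑ k, c k) = 1 →
            enorm₂ ((R s).mulVec b) ≤ enorm₂ ((R s).mulVec c)) →
          b = a s) := by
  -- injectivity and nonvanishing determinant on S
  have hinj : ∀ s ∈ S, Function.Injective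
      (Matrix.fromRows (R s) (Matrix.of fun (_ : Fin 1) (_ : Fin n) => (1:ℝ))).mulVec :=
    fun s hs => stmt3_mulVec_inj_of_rank _ (hrank s hs)
  have hdet : ∀ s ∈ S, (stmt3KKT (R s)).det ≠ 0 :=
    fun s hs => stmt3_det_ne_zero hn (R s) (hinj s hs)
  refine ⟨fun s => stmt3a (R s), ?_, ?_⟩
  · -- continuity
    have hM : ContinuousOn (fun s => stmt3KKT (R s)) S := by
      refine continuousOn_pi.mpr fun i => continuousOn_pi.mpr fun j => ?_
      refine Fin.lastCases ?_ ?_ i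
      · refine Fin.lastCases ?_ ?_ j
        · simpa [stmt3KKT] using continuousOn_const
        · intro l; simpa [stmt3KKT] using continuousOn_const
      · intro k
        refine Fin.lastCases ?_ ?_ j
        · simpa [stmt3KKT] using continuousOn_const
        · intro l
          have : ContinuousOn (fun s => ((R s)ᵀ * R s) k l) S := by
            simp only [Matrix.mul_apply, Matrix.transpose_apply]
            exact continuousOn_finset_sum _ fun i _ => (hRcont i k).mul (hRcont i l)
          simpa [stmt3KKT] using this
    have hdetc : ContinuousOn (fun s => (stmt3KKT (R s)).det) S :=
      (Continuous.matrix_det continuous_id).comp_continuousOn hM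
    refine continuousOn_pi.mpr fun k => ?_
    have hadj : ContinuousOn (fun s => (stmt3KKT (R s)).adjugate k.castSucc (Fin.last n)) S :=
      ((continuous_apply (Fin.last n)).comp ((continuous_apply k.castSucc).comp
        (Continuous.matrix_adjugate continuous_id))).comp_continuousOn hM
    have : ContinuousOn
        (fun s => ((stmt3KKT (R s)).det)⁻¹ * (stmt3KKT (R s)).adjugate k.castSucc (Fin.last n))
        S := (hdetc.inv₀ (fun s hs => hdet s hs)).mul hadj
    refine this.congr fun s hs => ?_
    simp [stmt3a, Matrix.inv_def, Ring.inverse_eq_inv']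
  · intro s hs
    obtain ⟨heq, hsum⟩ := stmt3_eqs (R s) (hdet s hs)
    refine ⟨hsum, ?_, ?_⟩
    · intro b hb
      have hdec := stmt3_decomp (R s) (hdet s hs) b hb
      apply Real.sqrt_le_sqrt
      rw [hdec]
      have : (0:ℝ) ≤ ∑ i, ((R s).mulVec (b - stmt3a (R s)) i) ^ 2 :=
        Finset.sum_nonneg fun i _ => sq_nonneg _
      linarith
    · intro b hb hbmin
      have hdec := stmt3_decomp (R s) (hdet s hs) b hb
      -- b is also a minimizer, hence enorms coincide
      have h1 : enorm₂ ((R s).mulVec b) ≤ enorm₂ ((R s).mulVec (stmt3a (R s))) :=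
        hbmin _ hsum
      have h2 : enorm₂ ((R s).mulVec (stmt3a (R s))) ≤ enorm₂ ((R s).mulVec b) := by
        apply Real.sqrt_le_sqrt
        rw [hdec]
        have : (0:ℝ) ≤ ∑ i, ((R s).mulVec (b - stmt3a (R s)) i) ^ 2 :=
          Finset.sum_nonneg fun i _ => sq_nonneg _
        linarith
      have heqn : enorm₂ ((R s).mulVec b) = enorm₂ ((R s).mulVec (stmt3a (R s))) :=
        le_antisymm h1 h2
      have hsq : ∑ i, ((R s).mulVec b i) ^ 2 = ∑ i, ((R s).mulVec (stmt3a (R s)) i) ^ 2 := by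
        have hb0 : (0:ℝ) ≤ ∑ i, ((R s).mulVec b i) ^ 2 :=
          Finset.sum_nonneg fun i _ => sq_nonneg _
        have ha0 : (0:ℝ) ≤ ∑ i, ((R s).mulVec (stmt3a (R s)) i) ^ 2 :=
          Finset.sum_nonneg fun i _ => sq_nonneg _
        have := congrArg (fun t : ℝ => t ^ 2) heqn
        simpa [enorm₂, Real.sq_sqrt, hb0, ha0] using this
      have hres0 : ∑ i, ((R s).mulVec (b - stmt3a (R s)) i) ^ 2 = 0 := by linarith
      have hres : (R s).mulVec (b - stmt3a (R s)) = 0 := by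
        funext i
        have h0 : ∀ i ∈ Finset.univ, (0:ℝ) ≤ ((R s).mulVec (b - stmt3a (R s)) i) ^ 2 :=
          fun i _ => sq_nonneg _
        have := (Finset.sum_eq_zero_iff_of_nonneg h0).mp hres0 i (Finset.mem_univ i)
        exact pow_eq_zero_iff (by norm_num) |>.mp this
      have husum : ∑ k, (b - stmt3a (R s)) k = 0 := by
        simp only [Pi.sub_apply, Finset.sum_sub_distrib, hb, hsum, sub_self]
      have : (b - stmt3a (R s)) = 0 := by
        apply hinj s hs
        rw [Matrix.fromRows_mulVec]
        funext i
        cases i with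
        | inl i => simp [hres]
        | inr i => simp [Matrix.mulVec, dotProduct, Finset.sum_sub_distrib, hb, hsum]
      have := sub_eq_zero.mp this
      exact this
end

section
/- Let M ≥ n ≥ 1, let J ∈ ℝ^{M×n} be a matrix, h ∈ ℝ^M a vector, and a_k ∈ ℝ^n a vector with eᵀa_k = 1. Define R = J + (h − J a_k) eᵀ ∈ ℝ^{M×n}, and let a_{k+1} ∈ ℝ^n be a minimizer of ‖Ra‖ over {a : eᵀa = 1}. Then the smallest singular value of R satisfies σ_min(R) ≤ √n ( ‖J‖ ‖a_{k+1} − a_k‖ + ‖h‖ ), where ‖J‖ is the operator (spectral) norm of J and ‖·‖ the Euclidean norm. -/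
open Matrix

/-- Operator (spectral) norm of a matrix: supremum of `‖Jv‖` over Euclidean unit vectors. -/
noncomputable def opNorm {M n : ℕ} (J : Matrix (Fin M) (Fin n) ℝ) : ℝ :=
  sSup {r : ℝ | ∃ v : Fin n → ℝ, _root_.enorm v = 1 ∧ r = _root_.enorm (J.mulVec v)}

/-- Smallest singular value of a matrix: minimum of `‖Rv‖` over Euclidean unit vectors. -/
noncomputable def sigmaMin {M n : ℕ} (R : Matrix (Fin M) (Fin n) ℝ) : ℝ :=
  sInf {r : ℝ | ∃ v : Fin n → ℝ, _root_.enorm v = 1 ∧ r = _root_.enorm (R.mulVec v)}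

lemma enorm_nonneg {k : ℕ} (v : Fin k → ℝ) : 0 ≤ _root_.enorm v := Real.sqrt_nonneg _

lemma enorm_smul_real {k : ℕ} (c : ℝ) (v : Fin k → ℝ) : _root_.enorm (c • v) = |c| * _root_.enorm v := by
  unfold _root_.enorm
  have : ∑ i, (c • v) i ^ 2 = c ^ 2 * ∑ i, v i ^ 2 := by
    simp [Finset.mul_sum, mul_pow]
  rw [this, Real.sqrt_mul (sq_nonneg c), Real.sqrt_sq_eq_abs]

/-- With `R = J + (h − J a_k) eᵀ` and `a_{k+1}` a minimizer of `‖Ra‖`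
over `{a : eᵀa = 1}`, the smallest singular value of `R` satisfies
`σ_min(R) ≤ √n (‖J‖ ‖a_{k+1} − a_k‖ + ‖h‖)`. -/
theorem stmt5 {M n : ℕ} (hn : 1 ≤ n) (hMn : n ≤ M)
    (J : Matrix (Fin M) (Fin n) ℝ) (h : Fin M → ℝ)
    (aK : Fin n → ℝ) (haK : (∑ j, aK j) = 1)
    (R : Matrix (Fin M) (Fin n) ℝ)
    (hR : R = J + Matrix.vecMulVec (h - J.mulVec aK) (fun _ => (1 : ℝ)))
    (aK1 : Fin n → ℝ) (haK1 : (∑ j, aK1 j) = 1)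
    (hmin : ∀ b : Fin n → ℝ, (∑ j, b j) = 1 →
      _root_.enorm (R.mulVec aK1) ≤ _root_.enorm (R.mulVec b)) :
    sigmaMin R ≤ Real.sqrt n * (opNorm J * _root_.enorm (aK1 - aK) + _root_.enorm h) := by
  -- R aK = h
  have hRaK : R.mulVec aK = h := by
    subst hR
    funext i
    simp only [Matrix.add_mulVec, Matrix.mulVec, Matrix.vecMulVec, dotProduct,
      Pi.add_apply, Pi.sub_apply, Matrix.of_apply, Matrix.add_apply, mul_one]
    have e1 : ∑ x, (J i x + (h i - ∑ x, J i x * aK x)) * aK x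
        = (∑ x, J i x * aK x) + (h i - ∑ x, J i x * aK x) * ∑ x, aK x := by
      rw [Finset.mul_sum, ← Finset.sum_add_distrib]
      exact Finset.sum_congr rfl (fun x _ => by ring)
    rw [e1, haK]
    ring
  -- norm of aK1 is positive
  set N := _root_.enorm aK1 with hN
  have hsum_sq : (1 : ℝ) ≤ (n : ℝ) * ∑ j, aK1 j ^ 2 := by
    have hcs := Finset.sum_mul_sq_le_sq_mul_sq Finset.univ (fun _ : Fin n => (1 : ℝ)) aK1
    simp [haK1] at hcs
    exact hcs
  have hNpos : 0 < N := by
    rw [hN]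
    unfold _root_.enorm
    apply Real.sqrt_pos.mpr
    by_contra hcon
    push_neg at hcon
    nlinarith [Finset.sum_nonneg (fun j (_ : j ∈ Finset.univ) => sq_nonneg (aK1 j))]
  -- √n * N ≥ 1
  have hsqrtN : (1 : ℝ) ≤ Real.sqrt n * N := by
    have h1 : Real.sqrt n * N = Real.sqrt ((n : ℝ) * ∑ j, aK1 j ^ 2) := by
      rw [hN]; unfold _root_.enorm
      rw [Real.sqrt_mul (by positivity)]
    rw [h1]
    have := Real.sqrt_le_sqrt hsum_sq
    simpa using this
  have hNinv : N⁻¹ ≤ Real.sqrt n := by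
    rw [inv_le_iff_one_le_mul₀ hNpos] at *
    linarith [hsqrtN]
  -- the unit vector
  set v : Fin n → ℝ := N⁻¹ • aK1 with hv
  have hv1 : _root_.enorm v = 1 := by
    rw [hv, enorm_smul_real, abs_of_pos (by positivity), ← hN, inv_mul_cancel₀ hNpos.ne']
  have hmem : _root_.enorm (R.mulVec v) ∈
      {r : ℝ | ∃ w : Fin n → ℝ, _root_.enorm w = 1 ∧ r = _root_.enorm (R.mulVec w)} :=
    ⟨v, hv1, rfl⟩
  have hbdd : BddBelow {r : ℝ | ∃ w : Fin n → ℝ, _root_.enorm w = 1 ∧ r = _root_.enorm (R.mulVec w)} :=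
    ⟨0, fun r ⟨w, _, hrw⟩ => hrw ▸ enorm_nonneg _⟩
  have hle : sigmaMin R ≤ _root_.enorm (R.mulVec v) := csInf_le hbdd hmem
  -- bound _root_.enorm (R.mulVec v)
  have hRv : _root_.enorm (R.mulVec v) = N⁻¹ * _root_.enorm (R.mulVec aK1) := by
    rw [hv, Matrix.mulVec_smul, enorm_smul_real, abs_of_pos (by positivity)]
  have hmin' : _root_.enorm (R.mulVec aK1) ≤ _root_.enorm h := by
    have := hmin aK haK
    rwa [hRaK] at this
  have hchain : _root_.enorm (R.mulVec v) ≤ Real.sqrt n * _root_.enorm h := by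
    rw [hRv]
    exact mul_le_mul hNinv hmin' (enorm_nonneg _) (Real.sqrt_nonneg _)
  -- opNorm J ≥ 0
  have hop : 0 ≤ opNorm J := by
    apply Real.sSup_nonneg
    rintro r ⟨w, _, rfl⟩
    exact enorm_nonneg _
  have : Real.sqrt n * _root_.enorm h ≤ Real.sqrt n * (opNorm J * _root_.enorm (aK1 - aK) + _root_.enorm h) := by
    apply mul_le_mul_of_nonneg_left _ (Real.sqrt_nonneg _)
    nlinarith [enorm_nonneg (aK1 - aK)]
  linarith
end
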